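/- arXiv:2009.14481 — 3 statements merged into one kernel-verified Lean document; each statement's English description precedes it below -/
import Mathlib

section
/- Let μ(y) = (y/2)[2y − √π·erfc(y)·exp(y²)(2y²−1)] for y > 0, and define f for x > 0 by f(x) = μ(1/x). Then as x → 0⁺, f(x) = 1 − x² + O(x³). -/
open Real MeasureTheory Filter Set

lemma intOn_gauss (y : ℝ) : IntegrableOn (fun t : ℝ => Real.exp (-t ^ 2)) (Set.Ioi y) := by
  have := (integrable_exp_neg_mul_sq (by norm_num : (0:ℝ) < 1)).integrableOn (s := Set.Ioi y)
  simpa using this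

lemma intOn_gauss6 {y : ℝ} (hy : 0 < y) :
    IntegrableOn (fun t : ℝ => Real.exp (-t ^ 2) / t ^ 6) (Set.Ioi y) := by
  have hmeas : AEStronglyMeasurable (fun t : ℝ => Real.exp (-t ^ 2) / t ^ 6)
      (volume.restrict (Set.Ioi y)) := by
    apply ContinuousOn.aestronglyMeasurable _ measurableSet_Ioi
    apply ContinuousOn.div (Continuous.continuousOn (by continuity))
      (Continuous.continuousOn (by continuity))
    intro t ht
    have : 0 < t := hy.trans ht
    positivity
  refine Integrable.mono ((intOn_gauss y).const_mul (1 / y ^ 6)) hmeas ?_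
  filter_upwards [ae_restrict_mem measurableSet_Ioi] with t ht
  have hty : 0 < t := hy.trans ht
  rw [Real.norm_eq_abs, Real.norm_eq_abs, abs_of_nonneg (by positivity),
    abs_of_nonneg (by positivity)]
  rw [div_le_iff₀ (by positivity)] at *
  have h6 : y ^ 6 ≤ t ^ 6 := pow_le_pow_left₀ hy.le (le_of_lt ht) 6
  calc Real.exp (-t ^ 2) = 1 / y ^ 6 * Real.exp (-t ^ 2) * y ^ 6 := by field_simp
    _ ≤ 1 / y ^ 6 * Real.exp (-t ^ 2) * t ^ 6 := by
        apply mul_le_mul_of_nonneg_left h6 (by positivity)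

-- antiderivative identity
lemma deriv_F {t : ℝ} (ht : 0 < t) :
    HasDerivAt (fun t : ℝ => Real.exp (-t ^ 2) * ((-1/2 * t ^ 4 + 1/4 * t ^ 2 - 3/8) / t ^ 5))
      (Real.exp (-t ^ 2) * (1 + 15 / (8 * t ^ 6))) t := by
  have hexp : HasDerivAt (fun t : ℝ => Real.exp (-t ^ 2)) (Real.exp (-t ^ 2) * (-2 * t)) t := by
    have h1 : HasDerivAt (fun t : ℝ => -t ^ 2) (-2 * t) t := by
      exact (hasDerivAt_pow 2 t).neg.congr_deriv (by norm_num)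
    exact h1.exp
  have hP : HasDerivAt (fun t : ℝ => -1/2 * t ^ 4 + 1/4 * t ^ 2 - 3/8)
      (-2 * t ^ 3 + 1/2 * t) t := by
    have := (((hasDerivAt_pow 4 t).const_mul (-1/2 : ℝ)).add
      ((hasDerivAt_pow 2 t).const_mul (1/4 : ℝ))).sub_const (3/8 : ℝ)
    refine this.congr_deriv ?_
    push_cast; ring
  have hQ : HasDerivAt (fun t : ℝ => t ^ 5) (5 * t ^ 4) t := by
    simpa using hasDerivAt_pow 5 t
  have hg := hP.div hQ (by positivity)
  have := hexp.mul hg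
  refine this.congr_deriv ?_
  simp only [Pi.div_apply]
  field_simp
  ring

lemma F_tendsto : Tendsto
    (fun t : ℝ => Real.exp (-t ^ 2) * ((-1/2 * t ^ 4 + 1/4 * t ^ 2 - 3/8) / t ^ 5))
    atTop (nhds 0) := by
  have hexp : Tendsto (fun t : ℝ => Real.exp (-t ^ 2)) atTop (nhds 0) := by
    apply Real.tendsto_exp_atBot.comp
    exact (tendsto_neg_atBot_iff.mpr (tendsto_pow_atTop (n := 2) (by norm_num) : Tendsto (fun t : ℝ => t ^ 2) atTop atTop))
  have hg : Tendsto (fun t : ℝ => (-1/2 * t ^ 4 + 1/4 * t ^ 2 - 3/8) / t ^ 5) atTop (nhds 0) := by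
    have h1 : Tendsto (fun t : ℝ => -1/2 * t⁻¹ + 1/4 * (t ^ 3)⁻¹ - 3/8 * (t ^ 5)⁻¹)
        atTop (nhds 0) := by
      have a1 : Tendsto (fun t : ℝ => t⁻¹) atTop (nhds 0) := tendsto_inv_atTop_zero
      have a3 : Tendsto (fun t : ℝ => (t ^ 3)⁻¹) atTop (nhds 0) :=
        a1.comp (tendsto_pow_atTop (by norm_num))
      have a5 : Tendsto (fun t : ℝ => (t ^ 5)⁻¹) atTop (nhds 0) :=
        a1.comp (tendsto_pow_atTop (by norm_num))
      have := ((a1.const_mul (-1/2 : ℝ)).add (a3.const_mul (1/4 : ℝ))).sub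
        (a5.const_mul (3/8 : ℝ))
      simpa using this
    apply h1.congr'
    filter_upwards [eventually_gt_atTop (0 : ℝ)] with t ht
    field_simp
  simpa using hexp.mul hg

lemma int_identity {y : ℝ} (hy : 0 < y) :
    ∫ t in Set.Ioi y, (Real.exp (-t ^ 2) * (1 + 15 / (8 * t ^ 6))) =
      Real.exp (-y ^ 2) * (1/(2*y) - 1/(4*y^3) + 3/(8*y^5)) := by
  have key := integral_Ioi_of_hasDerivAt_of_tendsto' (a := y)
    (f := fun t : ℝ => Real.exp (-t ^ 2) * ((-1/2 * t ^ 4 + 1/4 * t ^ 2 - 3/8) / t ^ 5))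
    (f' := fun t : ℝ => Real.exp (-t ^ 2) * (1 + 15 / (8 * t ^ 6)))
    (m := 0)
    (fun t ht => deriv_F (lt_of_lt_of_le hy ht))
    ?_ F_tendsto
  · rw [key]
    field_simp
    ring
  · have hint : IntegrableOn
        (fun t : ℝ => Real.exp (-t ^ 2) + 15/8 * (Real.exp (-t ^ 2) / t ^ 6)) (Set.Ioi y) :=
      (intOn_gauss y).add ((intOn_gauss6 hy).const_mul (15/8))
    have heq : EqOn (fun t : ℝ => Real.exp (-t ^ 2) + 15/8 * (Real.exp (-t ^ 2) / t ^ 6))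
        (fun t : ℝ => Real.exp (-t ^ 2) * (1 + 15 / (8 * t ^ 6))) (Set.Ioi y) := by
      intro t ht
      have : 0 < t := hy.trans ht
      field_simp
    exact hint.congr_fun heq measurableSet_Ioi



open Real

/-- Complementary error function. -/
noncomputable def erfc (x : ℝ) : ℝ := (2 / Real.sqrt Real.pi) * ∫ t in Set.Ioi x, Real.exp (-t ^ 2)

/-- Bussgang gain of the SSPA: `μ(y) = (y/2)[2y − √π·erfc(y)·e^{y²}(2y²−1)]`. -/
noncomputable def muSSPA (y : ℝ) : ℝ :=
  (y / 2) * (2 * y - Real.sqrt Real.pi * erfc y * Real.exp (y ^ 2) * (2 * y ^ 2 - 1))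

set_option maxHeartbeats 1000000 in
lemma mu_bound {y : ℝ} (hy : 1 ≤ y) : |muSSPA y - (1 - 1 / y ^ 2)| ≤ 4 / y ^ 3 := by
  have hy0 : (0:ℝ) < y := lt_of_lt_of_le one_pos hy
  have hy2 : (1:ℝ) ≤ y ^ 2 := by nlinarith
  have hy4 : (1:ℝ) ≤ y ^ 4 := by nlinarith
  have hy57 : y ^ 5 ≤ y ^ 7 := by nlinarith [mul_nonneg (pow_nonneg hy0.le 5) (by nlinarith : (0:ℝ) ≤ y ^ 2 - 1)]
  set I := ∫ t in Set.Ioi y, Real.exp (-t ^ 2) with hIdef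
  set K := ∫ t in Set.Ioi y, Real.exp (-t ^ 2) / t ^ 6 with hKdef
  set A := Real.exp (y ^ 2) with hAdef
  have hA0 : (0:ℝ) < A := Real.exp_pos _
  have hB : Real.exp (-y ^ 2) = A⁻¹ := Real.exp_neg _
  -- split the integral identity
  have hsplit : I + 15/8 * K = A⁻¹ * (1/(2*y) - 1/(4*y^3) + 3/(8*y^5)) := by
    rw [← hB, ← int_identity hy0, ← MeasureTheory.integral_const_mul,
      ← MeasureTheory.integral_add (intOn_gauss y) ((intOn_gauss6 hy0).const_mul (15/8))]
    apply MeasureTheory.setIntegral_congr_fun measurableSet_Ioi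
    intro t ht
    have : 0 < t := hy0.trans ht
    field_simp
  have hK0 : 0 ≤ K := by
    apply MeasureTheory.setIntegral_nonneg measurableSet_Ioi
    intro t ht
    positivity
  have hKI : K ≤ 1 / y ^ 6 * I := by
    rw [hKdef, hIdef, ← MeasureTheory.integral_const_mul]
    apply MeasureTheory.setIntegral_mono_on (intOn_gauss6 hy0)
      ((intOn_gauss y).const_mul _) measurableSet_Ioi
    intro t ht
    have hty : 0 < t := hy0.trans ht
    rw [div_le_iff₀ (by positivity)]
    have h6 : y ^ 6 ≤ t ^ 6 := pow_le_pow_left₀ hy0.le (le_of_lt ht) 6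
    calc Real.exp (-t ^ 2) = 1 / y ^ 6 * Real.exp (-t ^ 2) * y ^ 6 := by field_simp
      _ ≤ 1 / y ^ 6 * Real.exp (-t ^ 2) * t ^ 6 := by
          apply mul_le_mul_of_nonneg_left h6 (by positivity)
  have hIeq : I = A⁻¹ * (1/(2*y) - 1/(4*y^3) + 3/(8*y^5)) - 15/8 * K := by linarith
  have hIle : I ≤ A⁻¹ * (1/(2*y) - 1/(4*y^3) + 3/(8*y^5)) := by linarith
  -- bound on E = A * K
  have hE0 : 0 ≤ A * K := mul_nonneg hA0.le hK0
  have hE7 : y ^ 7 * (A * K) ≤ 7/8 := by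
    have h1 : A * K ≤ A * (1 / y ^ 6 * (A⁻¹ * (1/(2*y) - 1/(4*y^3) + 3/(8*y^5)))) := by
      apply mul_le_mul_of_nonneg_left (hKI.trans ?_) hA0.le
      apply mul_le_mul_of_nonneg_left hIle (by positivity)
    have h2 : A * (1 / y ^ 6 * (A⁻¹ * (1/(2*y) - 1/(4*y^3) + 3/(8*y^5))))
        = 1/(2*y^7) - 1/(4*y^9) + 3/(8*y^11) := by
      field_simp
    have h3 : y ^ 7 * (1/(2*y^7) - 1/(4*y^9) + 3/(8*y^11))
        = 1/2 - 1/(4*y^2) + 3/(8*y^4) := by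
      field_simp
    have h4 : 3/(8*y^4) ≤ 3/8 := by
      rw [div_le_div_iff₀ (by positivity) (by norm_num)]
      nlinarith [hy4]
    have h5 : 0 ≤ 1/(4*y^2) := by positivity
    have h6 : y ^ 7 * (A * K) ≤ y ^ 7 * (1/(2*y^7) - 1/(4*y^9) + 3/(8*y^11)) := by
      apply mul_le_mul_of_nonneg_left (h1.trans_eq h2) (by positivity)
    rw [h3] at h6
    linarith
  -- the value of sqrt pi * erfc * exp
  have hsqrtpi : (0:ℝ) < Real.sqrt Real.pi := Real.sqrt_pos.mpr Real.pi_pos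
  have hSval : Real.sqrt Real.pi * erfc y * A = 2 * A * I := by
    rw [erfc, ← hIdef]
    field_simp
  -- key algebraic identity
  have key : (muSSPA y - (1 - 1 / y ^ 2)) * y ^ 4 = 3/8 + 15/8 * (2*y^7 - y^5) * (A * K) := by
    rw [muSSPA, hSval, hIeq]
    field_simp
    ring
  have h2y : (0:ℝ) ≤ 15/8 * (2*y^7 - y^5) := by nlinarith [hy57, pow_nonneg hy0.le 5]
  have habs : |muSSPA y - (1 - 1 / y ^ 2)| * y ^ 4 ≤ 4 * y := by
    rw [← abs_of_nonneg (by positivity : (0:ℝ) ≤ y ^ 4), ← abs_mul, key,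
      abs_of_nonneg (add_nonneg (by norm_num) (mul_nonneg h2y hE0))]
    nlinarith [hE7, mul_nonneg (pow_nonneg hy0.le 5) hE0]
  rw [le_div_iff₀ (by positivity : (0:ℝ) < y ^ 3)]
  nlinarith [habs, abs_nonneg (muSSPA y - (1 - 1 / y ^ 2))]

/-- Large input back-off expansion: with `f(x) = μ(1/x)`, as `x → 0⁺`,
`f(x) = 1 − x² + O(x³)`. -/
theorem stmt1 :
    (fun x : ℝ => muSSPA (1 / x) - (1 - x ^ 2)) =O[nhdsWithin 0 (Set.Ioi 0)]
      (fun x : ℝ => x ^ 3) := by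
  rw [Asymptotics.isBigO_iff]
  refine ⟨4, ?_⟩
  filter_upwards [Ioo_mem_nhdsGT
    (zero_lt_one : (0:ℝ) < 1)] with x hx
  obtain ⟨hx0, hx1⟩ := hx
  have hy : (1:ℝ) ≤ 1 / x := by rw [le_div_iff₀ hx0]; linarith
  have hb := mu_bound hy
  have e1 : 1 / (1 / x) ^ 2 = x ^ 2 := by field_simp
  have e2 : 4 / (1 / x) ^ 3 = 4 * x ^ 3 := by field_simp
  rw [e1, e2] at hb
  rw [Real.norm_eq_abs, Real.norm_eq_abs, abs_of_nonneg (by positivity : (0:ℝ) ≤ x ^ 3)]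
  exact hb
end

section
/- For the function μ(y) = (y/2)[2y − √π·erfc(y)·e^{y²}·(2y²−1)], one has lim_{y→∞} μ(y) = 1. -/
open MeasureTheory Set Filter Real

lemma hasDerivAt_exp_neg_sq (x : ℝ) :
    HasDerivAt (fun t : ℝ => exp (-t ^ 2)) (-(2 * x) * exp (-x ^ 2)) x := by
  simpa [mul_comm] using ((hasDerivAt_pow 2 x).fun_neg).exp

lemma tendsto_exp_neg_sq_atTop : Tendsto (fun t : ℝ => exp (-t ^ 2)) atTop (nhds 0) :=
  tendsto_exp_atBot.comp (tendsto_neg_atBot_iff.mpr (tendsto_pow_atTop two_ne_zero))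

lemma integrable_exp_neg_sq : Integrable (fun t : ℝ => exp (-t ^ 2)) := by
  simpa using integrable_exp_neg_mul_sq (b := 1) one_pos

lemma integrable_mul_exp_neg_sq : Integrable (fun t : ℝ => t * exp (-t ^ 2)) := by
  simpa using integrable_mul_exp_neg_mul_sq (b := 1) one_pos

lemma integral_Ioi_mul_exp_neg_sq (y : ℝ) :
    ∫ t in Ioi y, t * exp (-t ^ 2) = exp (-y ^ 2) / 2 := by
  have hderiv : ∀ x ∈ Ici y,
      HasDerivAt (fun t : ℝ => -exp (-t ^ 2) / 2) (x * exp (-x ^ 2)) x := fun x _ =>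
    ((hasDerivAt_exp_neg_sq x).fun_neg.div_const 2).congr_deriv (by ring)
  have hlim : Tendsto (fun t : ℝ => -exp (-t ^ 2) / 2) atTop (nhds 0) := by
    simpa using tendsto_exp_neg_sq_atTop.neg.div_const 2
  rw [integral_Ioi_of_hasDerivAt_of_tendsto' hderiv integrable_mul_exp_neg_sq.integrableOn hlim]
  ring

lemma exp_neg_sq_div_pow_four_le {y t : ℝ} (hy : 0 < y) (hyt : y ≤ t) :
    exp (-t ^ 2) / t ^ 4 ≤ t * exp (-t ^ 2) / y ^ 5 := by
  have ht : 0 < t := hy.trans_le hyt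
  rw [div_le_div_iff₀ (by positivity) (by positivity)]
  have hpow : y ^ 5 ≤ t ^ 5 := pow_le_pow_left₀ hy.le hyt 5
  calc exp (-t ^ 2) * y ^ 5 ≤ exp (-t ^ 2) * t ^ 5 := by gcongr
    _ = t * exp (-t ^ 2) * t ^ 4 := by ring

lemma integrableOn_exp_neg_sq_div_pow_four {y : ℝ} (hy : 0 < y) :
    IntegrableOn (fun t : ℝ => exp (-t ^ 2) / t ^ 4) (Ioi y) := by
  refine Integrable.mono' (integrable_mul_exp_neg_sq.integrableOn.div_const (y ^ 5)) ?_ ?_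
  · refine ContinuousOn.aestronglyMeasurable ?_ measurableSet_Ioi
    exact ContinuousOn.div (by fun_prop) (by fun_prop) fun t ht => by
      have : 0 < t := hy.trans ht
      positivity
  · filter_upwards [ae_restrict_mem measurableSet_Ioi] with t (ht : y < t)
    have : 0 < t := hy.trans ht
    rw [norm_of_nonneg (by positivity)]
    exact exp_neg_sq_div_pow_four_le hy ht.le

lemma integral_Ioi_exp_neg_sq_div_pow_four_nonneg {y : ℝ} (hy : 0 < y) :
    0 ≤ ∫ t in Ioi y, exp (-t ^ 2) / t ^ 4 :=
  setIntegral_nonneg measurableSet_Ioi fun t ht => by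
    have : 0 < t := hy.trans ht
    positivity

lemma integral_Ioi_exp_neg_sq_div_pow_four_le {y : ℝ} (hy : 0 < y) :
    ∫ t in Ioi y, exp (-t ^ 2) / t ^ 4 ≤ exp (-y ^ 2) / (2 * y ^ 5) :=
  calc ∫ t in Ioi y, exp (-t ^ 2) / t ^ 4
      ≤ ∫ t in Ioi y, t * exp (-t ^ 2) / y ^ 5 :=
        setIntegral_mono_on (integrableOn_exp_neg_sq_div_pow_four hy)
          (integrable_mul_exp_neg_sq.integrableOn.div_const _) measurableSet_Ioi
          fun t ht => exp_neg_sq_div_pow_four_le hy (le_of_lt ht)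
    _ = exp (-y ^ 2) / (2 * y ^ 5) := by
        rw [integral_div, integral_Ioi_mul_exp_neg_sq]
        ring

lemma integral_Ioi_exp_neg_sq_eq {y : ℝ} (hy : 0 < y) :
    ∫ t in Ioi y, exp (-t ^ 2) =
      exp (-y ^ 2) * (1 / (2 * y) - 1 / (4 * y ^ 3)) +
        3 / 4 * ∫ t in Ioi y, exp (-t ^ 2) / t ^ 4 := by
  set F : ℝ → ℝ := fun t => exp (-t ^ 2) * (1 / (4 * t ^ 3) - 1 / (2 * t))
  have hderiv : ∀ x ∈ Ici y,
      HasDerivAt F (exp (-x ^ 2) - 3 / 4 * (exp (-x ^ 2) / x ^ 4)) x := by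
    intro x hx
    have hx0 : x ≠ 0 := (hy.trans_le hx).ne'
    have hrat : HasDerivAt (fun t : ℝ => 1 / (4 * t ^ 3) - 1 / (2 * t))
        (1 / (2 * x ^ 2) - 3 / (4 * x ^ 4)) x := by
      have h3 := (hasDerivAt_const x (1 : ℝ)).fun_div
        ((hasDerivAt_pow 3 x).const_mul 4) (by positivity)
      have h1 := (hasDerivAt_const x (1 : ℝ)).fun_div
        ((hasDerivAt_id' x).const_mul 2) (by simpa using hx0)
      refine (h3.fun_sub h1).congr_deriv ?_
      field_simp
      ring
    refine ((hasDerivAt_exp_neg_sq x).fun_mul hrat).congr_deriv ?_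
    field_simp
    ring
  have hint : IntegrableOn (fun x : ℝ => exp (-x ^ 2) - 3 / 4 * (exp (-x ^ 2) / x ^ 4)) (Ioi y) :=
    integrable_exp_neg_sq.integrableOn.sub ((integrableOn_exp_neg_sq_div_pow_four hy).const_mul _)
  have hlim : Tendsto F atTop (nhds 0) := by
    have hrat : Tendsto (fun t : ℝ => 1 / (4 * t ^ 3) - 1 / (2 * t)) atTop (nhds 0) := by
      have h3 : Tendsto (fun t : ℝ => 1 / (4 * t ^ 3)) atTop (nhds 0) := by
        simpa only [one_div, Function.comp_def] using tendsto_inv_atTop_zero.comp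
          ((tendsto_pow_atTop three_ne_zero).const_mul_atTop four_pos)
      have h1 : Tendsto (fun t : ℝ => 1 / (2 * t)) atTop (nhds 0) := by
        simpa only [one_div, Function.comp_def, id] using
          tendsto_inv_atTop_zero.comp ((tendsto_id (α := ℝ)).const_mul_atTop two_pos)
      simpa using h3.sub h1
    simpa only [mul_zero] using tendsto_exp_neg_sq_atTop.mul hrat
  have key := integral_Ioi_of_hasDerivAt_of_tendsto' hderiv hint hlim
  rw [integral_sub integrable_exp_neg_sq.integrableOn
    ((integrableOn_exp_neg_sq_div_pow_four hy).const_mul _), integral_const_mul] at key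
  linear_combination key

lemma exists_sqrt_pi_mul_erfc_mul_exp_sq_eq {y : ℝ} (hy : 0 < y) :
    ∃ r, 0 ≤ r ∧ r ≤ 3 / (4 * y ^ 5) ∧
      sqrt π * erfc y * exp (y ^ 2) = 1 / y - 1 / (2 * y ^ 3) + r := by
  set R := ∫ t in Ioi y, exp (-t ^ 2) / t ^ 4
  refine ⟨3 / 2 * exp (y ^ 2) * R, by
    have := integral_Ioi_exp_neg_sq_div_pow_four_nonneg hy
    positivity, ?_, ?_⟩
  · calc 3 / 2 * exp (y ^ 2) * R ≤ 3 / 2 * exp (y ^ 2) * (exp (-y ^ 2) / (2 * y ^ 5)) := by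
          gcongr
          exact integral_Ioi_exp_neg_sq_div_pow_four_le hy
      _ = 3 / (4 * y ^ 5) := by rw [exp_neg]; field_simp; norm_num
  · rw [erfc, integral_Ioi_exp_neg_sq_eq hy, exp_neg]
    field_simp
    ring

lemma muSSPA_mem_Icc {y : ℝ} (hy : 1 ≤ y) : muSSPA y ∈ Icc (1 - 1 / y ^ 2) 1 := by
  have hy0 : 0 < y := one_pos.trans_le hy
  obtain ⟨r, hr0, hr, herfc⟩ := exists_sqrt_pi_mul_erfc_mul_exp_sq_eq hy0
  have hmu : muSSPA y = 1 - 1 / (4 * y ^ 2) - y * (2 * y ^ 2 - 1) / 2 * r := by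
    rw [muSSPA, herfc]
    field_simp
    ring
  have hcoef : 0 ≤ y * (2 * y ^ 2 - 1) / 2 := by
    have : 1 ≤ y ^ 2 := one_le_pow₀ hy
    have : 0 ≤ 2 * y ^ 2 - 1 := by linarith
    positivity
  have hrem : y * (2 * y ^ 2 - 1) / 2 * r ≤ 3 / (4 * y ^ 2) :=
    calc y * (2 * y ^ 2 - 1) / 2 * r ≤ y * (2 * y ^ 2 - 1) / 2 * (3 / (4 * y ^ 5)) := by gcongr
      _ = 3 / (4 * y ^ 2) - 3 / (8 * y ^ 4) := by field_simp; ring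
      _ ≤ 3 / (4 * y ^ 2) := by linarith [show 0 ≤ 3 / (8 * y ^ 4) by positivity]
  constructor
  · rw [hmu]
    linarith [show 1 / y ^ 2 = 1 / (4 * y ^ 2) + 3 / (4 * y ^ 2) by ring]
  · rw [hmu]
    linarith [show 0 ≤ 1 / (4 * y ^ 2) by positivity, mul_nonneg hcoef hr0]

/-- Ideal-amplifier limit: `μ(y) → 1` as `y → ∞`. -/
theorem stmt11 : Filter.Tendsto muSSPA Filter.atTop (nhds 1) := by
  have hlower : Tendsto (fun y : ℝ => 1 - 1 / y ^ 2) atTop (nhds 1) := by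
    simpa only [one_div, sub_zero, Function.comp_def] using (tendsto_const_nhds (x := (1 : ℝ))).sub
      (tendsto_inv_atTop_zero.comp (tendsto_pow_atTop (α := ℝ) two_ne_zero))
  refine tendsto_of_tendsto_of_tendsto_of_le_of_le' hlower (tendsto_const_nhds (x := (1 : ℝ))) ?_ ?_ <;>
    filter_upwards [eventually_ge_atTop 1] with y hy
  exacts [(muSSPA_mem_Icc hy).1, (muSSPA_mem_Icc hy).2]
end

section
/- Define λ(σ) = A² + (A⁴/σ²)·exp(A²/σ²)·Ei(−A²/σ²) − σ²·μ(A/σ)², where μ(y) = (y/2)[2y − √π·erfc(y)·e^{y²}(2y²−1)] and Ei(x) = ∫_{−∞}^x t^{−1}e^t dt for x < 0. Then as σ/A → 0⁺, λ(σ) = σ⁶/(2A⁴) + O((σ/A)⁸·A²). -/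
/-- Exponential integral `Ei(x) = ∫_{−∞}^x e^t/t dt` (for `x < 0`). -/
noncomputable def Ei (x : ℝ) : ℝ := ∫ t in Set.Iio x, Real.exp t / t

/-- Distortion variance of the soft limiter with saturation `A`:
`λ(σ) = A² + (A⁴/σ²)·e^{A²/σ²}·Ei(−A²/σ²) − σ²·μ(A/σ)²`. -/
noncomputable def lamDist (A σ : ℝ) : ℝ :=
  A ^ 2 + (A ^ 4 / σ ^ 2) * Real.exp (A ^ 2 / σ ^ 2) * Ei (-(A ^ 2 / σ ^ 2))
    - σ ^ 2 * (muSSPA (A / σ)) ^ 2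

open Real MeasureTheory Set Filter Topology Asymptotics

lemma IntegrableOn.div_pow_Ioi {f : ℝ → ℝ} {a : ℝ} (ha : 0 < a) (hf : IntegrableOn f (Ioi a))
    (n : ℕ) : IntegrableOn (fun t => f t / t ^ n) (Ioi a) := by
  refine hf.mul_bdd (c := (a ^ n)⁻¹) (by fun_prop) ?_
  filter_upwards [ae_restrict_mem measurableSet_Ioi] with t (ht : a < t)
  rw [norm_inv, norm_pow, Real.norm_of_nonneg (ha.trans ht).le]
  gcongr

lemma integrableOn_exp_neg_div_pow {a : ℝ} (ha : 0 < a) (n : ℕ) :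
    IntegrableOn (fun t => exp (-t) / t ^ n) (Ioi a) :=
  IntegrableOn.div_pow_Ioi ha (by simpa using exp_neg_integrableOn_Ioi a one_pos) n

lemma integrableOn_exp_neg_sq_div_pow {a : ℝ} (ha : 0 < a) (n : ℕ) :
    IntegrableOn (fun t => exp (-t ^ 2) / t ^ n) (Ioi a) :=
  IntegrableOn.div_pow_Ioi ha (by simpa using (integrable_exp_neg_mul_sq one_pos).integrableOn) n

lemma Ei_neg (z : ℝ) : Ei (-z) = -∫ t in Ioi z, exp (-t) / t := by
  rw [Ei, ← integral_Iic_eq_integral_Iio, ← integral_comp_neg_Ioi, ← integral_neg]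
  simp only [div_neg]

lemma integral_Ioi_exp_neg_div_pow {a : ℝ} (ha : 0 < a) (n : ℕ) :
    ∫ t in Ioi a, exp (-t) / t ^ (n + 1) =
      exp (-a) / a ^ (n + 1) - (n + 1) * ∫ t in Ioi a, exp (-t) / t ^ (n + 2) := by
  have hIBP : ∫ t in Ioi a, (exp (-t) / t ^ (n + 1) + (n + 1) * (exp (-t) / t ^ (n + 2))) =
      0 - -exp (-a) / a ^ (n + 1) := by
    refine integral_Ioi_of_hasDerivAt_of_tendsto' (f := fun t => -exp (-t) / t ^ (n + 1))
      (fun t (ht : a ≤ t) => ?_) ?_ ?_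
    · have ht0 : t ≠ 0 := (ha.trans_le ht).ne'
      refine (((hasDerivAt_neg t).exp.neg).div (hasDerivAt_pow (n + 1) t)
        (pow_ne_zero _ ht0)).congr_deriv ?_
      simp only [Pi.neg_apply, Nat.add_sub_cancel, Nat.cast_add, Nat.cast_one]
      field_simp
      ring
    · exact (integrableOn_exp_neg_div_pow ha _).add
        ((integrableOn_exp_neg_div_pow ha _).const_mul _)
    · simpa [neg_div] using (tendsto_exp_neg_atTop_nhds_zero.div_atTop
        (tendsto_pow_atTop n.succ_ne_zero)).neg
  rw [integral_add (integrableOn_exp_neg_div_pow ha _)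
    ((integrableOn_exp_neg_div_pow ha _).const_mul _), integral_const_mul] at hIBP
  rw [eq_sub_iff_add_eq, hIBP]
  ring

lemma integral_Ioi_exp_neg_sq_div_pow {a : ℝ} (ha : 0 < a) (n : ℕ) :
    ∫ t in Ioi a, exp (-t ^ 2) / t ^ n =
      exp (-a ^ 2) / (2 * a ^ (n + 1))
        - (n + 1) / 2 * ∫ t in Ioi a, exp (-t ^ 2) / t ^ (n + 2) := by
  have hIBP : ∫ t in Ioi a, (exp (-t ^ 2) / t ^ n + (n + 1) / 2 * (exp (-t ^ 2) / t ^ (n + 2))) =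
      0 - -exp (-a ^ 2) / (2 * a ^ (n + 1)) := by
    refine integral_Ioi_of_hasDerivAt_of_tendsto' (f := fun t => -exp (-t ^ 2) / (2 * t ^ (n + 1)))
      (fun t (ht : a ≤ t) => ?_) ?_ ?_
    · have ht0 : t ≠ 0 := (ha.trans_le ht).ne'
      refine ((((hasDerivAt_pow 2 t).neg).exp.neg).div ((hasDerivAt_pow (n + 1) t).const_mul 2)
        (by positivity)).congr_deriv ?_
      simp only [Pi.neg_apply, Nat.add_sub_cancel, Nat.cast_add, Nat.cast_one, Nat.cast_ofNat]
      field_simp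
      ring
    · exact (integrableOn_exp_neg_sq_div_pow ha _).add
        ((integrableOn_exp_neg_sq_div_pow ha _).const_mul _)
    · have hexp : Tendsto (fun t : ℝ => exp (-t ^ 2)) atTop (𝓝 0) :=
        tendsto_exp_neg_atTop_nhds_zero.comp (tendsto_pow_atTop two_ne_zero)
      simpa [neg_div] using
        (hexp.div_atTop ((tendsto_pow_atTop n.succ_ne_zero).const_mul_atTop two_pos)).neg
  rw [integral_add (integrableOn_exp_neg_sq_div_pow ha _)
    ((integrableOn_exp_neg_sq_div_pow ha _).const_mul _), integral_const_mul] at hIBP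
  rw [eq_sub_iff_add_eq, hIBP]
  ring

lemma abs_exp_mul_Ei_neg_add_le {z : ℝ} (hz : 0 < z) :
    |exp z * Ei (-z) + (1 / z - 1 / z ^ 2 + 2 / z ^ 3 - 6 / z ^ 4)| ≤ 24 / z ^ 5 := by
  have h1 := integral_Ioi_exp_neg_div_pow hz 0
  have h2 := integral_Ioi_exp_neg_div_pow hz 1
  have h3 := integral_Ioi_exp_neg_div_pow hz 2
  have h4 := integral_Ioi_exp_neg_div_pow hz 3
  have h5 := integral_Ioi_exp_neg_div_pow hz 4
  norm_num only [pow_one] at h1 h2 h3 h4 h5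
  have hI5 : 0 ≤ ∫ t in Ioi z, exp (-t) / t ^ 5 :=
    setIntegral_nonneg measurableSet_Ioi fun t (ht : z < t) => by have := hz.trans ht; positivity
  have hI6 : 0 ≤ ∫ t in Ioi z, exp (-t) / t ^ 6 :=
    setIntegral_nonneg measurableSet_Ioi fun t (ht : z < t) => by have := hz.trans ht; positivity
  have hexp : exp z * exp (-z) = 1 := by rw [← exp_add, add_neg_cancel, exp_zero]
  have hrem : exp z * Ei (-z) + (1 / z - 1 / z ^ 2 + 2 / z ^ 3 - 6 / z ^ 4) =
      -(24 * (exp z * ∫ t in Ioi z, exp (-t) / t ^ 5)) := by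
    rw [Ei_neg, h1, h2, h3, h4]
    linear_combination -(1 / z - 1 / z ^ 2 + 2 / z ^ 3 - 6 / z ^ 4) * hexp
  have hbound : exp z * ∫ t in Ioi z, exp (-t) / t ^ 5 ≤ 1 / z ^ 5 := by
    rw [h5, mul_sub, ← mul_div_assoc, hexp]
    exact sub_le_self _ (mul_nonneg (exp_pos z).le (mul_nonneg (by norm_num) hI6))
  rw [hrem, abs_neg, abs_of_nonneg (by positivity), div_eq_mul_one_div 24]
  gcongr

lemma abs_sqrt_pi_mul_erfc_mul_exp_sq_sub_le {y : ℝ} (hy : 0 < y) :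
    |√π * erfc y * exp (y ^ 2) - (1 / y - 1 / (2 * y ^ 3) + 3 / (4 * y ^ 5) - 15 / (8 * y ^ 7))|
      ≤ 105 / (16 * y ^ 9) := by
  have h0 := integral_Ioi_exp_neg_sq_div_pow hy 0
  have h2 := integral_Ioi_exp_neg_sq_div_pow hy 2
  have h4 := integral_Ioi_exp_neg_sq_div_pow hy 4
  have h6 := integral_Ioi_exp_neg_sq_div_pow hy 6
  have h8 := integral_Ioi_exp_neg_sq_div_pow hy 8
  norm_num only [pow_zero, div_one, pow_one] at h0 h2 h4 h6 h8
  have hG10 : 0 ≤ ∫ t in Ioi y, exp (-t ^ 2) / t ^ 10 :=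
    setIntegral_nonneg measurableSet_Ioi fun t _ => by positivity
  have hexp : exp (y ^ 2) * exp (-y ^ 2) = 1 := by rw [← exp_add, add_neg_cancel, exp_zero]
  have herfc : √π * erfc y = 2 * ∫ t in Ioi y, exp (-t ^ 2) := by
    rw [erfc]
    field_simp
  have hrem : √π * erfc y * exp (y ^ 2)
      - (1 / y - 1 / (2 * y ^ 3) + 3 / (4 * y ^ 5) - 15 / (8 * y ^ 7)) =
      105 / 8 * (exp (y ^ 2) * ∫ t in Ioi y, exp (-t ^ 2) / t ^ 8) := by
    rw [herfc, h0, h2, h4, h6]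
    linear_combination (1 / y - 1 / (2 * y ^ 3) + 3 / (4 * y ^ 5) - 15 / (8 * y ^ 7)) * hexp
  have hbound : exp (y ^ 2) * ∫ t in Ioi y, exp (-t ^ 2) / t ^ 8 ≤ 1 / (2 * y ^ 9) := by
    rw [h8, mul_sub, ← mul_div_assoc, hexp]
    exact sub_le_self _ (mul_nonneg (exp_pos _).le (mul_nonneg (by norm_num) hG10))
  rw [hrem, abs_of_nonneg (by positivity)]
  calc 105 / 8 * (exp (y ^ 2) * ∫ t in Ioi y, exp (-t ^ 2) / t ^ 8)
      ≤ 105 / 8 * (1 / (2 * y ^ 9)) := by gcongr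
    _ = 105 / (16 * y ^ 9) := by field_simp; norm_num

lemma isBigO_Ei_term_sub :
    (fun y : ℝ => y ^ 2 + y ^ 4 * exp (y ^ 2) * Ei (-y ^ 2) - (1 - 2 / y ^ 2 + 6 / y ^ 4))
      =O[atTop] fun y => (y ^ 6)⁻¹ := by
  refine IsBigO.of_bound 24 ?_
  filter_upwards [eventually_gt_atTop 0] with y hy
  have hEi := abs_exp_mul_Ei_neg_add_le (pow_pos hy 2)
  have hEq : y ^ 2 + y ^ 4 * exp (y ^ 2) * Ei (-y ^ 2) - (1 - 2 / y ^ 2 + 6 / y ^ 4) =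
      y ^ 4 * (exp (y ^ 2) * Ei (-y ^ 2)
        + (1 / y ^ 2 - 1 / (y ^ 2) ^ 2 + 2 / (y ^ 2) ^ 3 - 6 / (y ^ 2) ^ 4)) := by
    field_simp
    ring
  rw [hEq, Real.norm_eq_abs, Real.norm_eq_abs, abs_mul,
    abs_of_pos (by positivity : (0 : ℝ) < y ^ 4), abs_of_pos (by positivity : (0 : ℝ) < (y ^ 6)⁻¹)]
  calc y ^ 4 * |exp (y ^ 2) * Ei (-y ^ 2)
          + (1 / y ^ 2 - 1 / (y ^ 2) ^ 2 + 2 / (y ^ 2) ^ 3 - 6 / (y ^ 2) ^ 4)|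
      ≤ y ^ 4 * (24 / (y ^ 2) ^ 5) := by gcongr
    _ = 24 * (y ^ 6)⁻¹ := by field_simp

lemma isBigO_muSSPA_sub :
    (fun y : ℝ => muSSPA y - (1 - 1 / y ^ 2 + 9 / (4 * y ^ 4))) =O[atTop] fun y => (y ^ 6)⁻¹ := by
  refine IsBigO.of_bound 8 ?_
  filter_upwards [eventually_ge_atTop 1] with y hy
  have hy0 : 0 < y := one_pos.trans_le hy
  set r := √π * erfc y * exp (y ^ 2)
    - (1 / y - 1 / (2 * y ^ 3) + 3 / (4 * y ^ 5) - 15 / (8 * y ^ 7)) with hr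
  have hrbound : |r| ≤ 105 / (16 * y ^ 9) := abs_sqrt_pi_mul_erfc_mul_exp_sq_sub_le hy0
  have hmu : muSSPA y - (1 - 1 / y ^ 2 + 9 / (4 * y ^ 4)) =
      -(15 / 16 * (y ^ 6)⁻¹) - y * (2 * y ^ 2 - 1) / 2 * r := by
    rw [muSSPA, hr]
    field_simp
    ring
  have hfac : |y * (2 * y ^ 2 - 1) / 2| ≤ y ^ 3 := by
    rw [abs_of_nonneg (by nlinarith)]
    nlinarith
  rw [hmu, Real.norm_of_nonneg (by positivity : (0 : ℝ) ≤ (y ^ 6)⁻¹)]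
  calc |-(15 / 16 * (y ^ 6)⁻¹) - y * (2 * y ^ 2 - 1) / 2 * r|
      ≤ 15 / 16 * (y ^ 6)⁻¹ + y ^ 3 * (105 / (16 * y ^ 9)) := by
        refine (abs_sub _ _).trans (add_le_add (by rw [abs_neg, abs_of_pos (by positivity)]) ?_)
        rw [abs_mul]
        gcongr
    _ = 15 / 2 * (y ^ 6)⁻¹ := by field_simp; ring
    _ ≤ 8 * (y ^ 6)⁻¹ := by gcongr; norm_num

lemma isBigO_distortion :
    (fun y : ℝ => y ^ 2 + y ^ 4 * exp (y ^ 2) * Ei (-y ^ 2) - muSSPA y ^ 2 - 1 / (2 * y ^ 4))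
      =O[atTop] fun y => (y ^ 6)⁻¹ := by
  set m₀ : ℝ → ℝ := fun y => 1 - 1 / y ^ 2 + 9 / (4 * y ^ 4)
  have hinv : ∀ k ≠ 0, Tendsto (fun y : ℝ => 1 / y ^ k) atTop (𝓝 0) := fun k hk =>
    tendsto_const_nhds.div_atTop (tendsto_pow_atTop hk)
  have hm₀ : Tendsto m₀ atTop (𝓝 1) := by
    convert ((tendsto_const_nhds (x := (1 : ℝ))).sub (hinv 2 two_ne_zero)).add
      ((hinv 4 four_ne_zero).const_mul (9 / 4)) using 2 with y
    · simp only [m₀]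
      ring
    · norm_num
  have hsum : (fun y => muSSPA y + m₀ y) =O[atTop] fun _ => (1 : ℝ) := by
    have hdiff := isBigO_muSSPA_sub.trans_tendsto (by simpa using hinv 6 (by norm_num))
    refine Tendsto.isBigO_one ℝ (c := 0 + 2 * 1) ?_
    convert hdiff.add (hm₀.const_mul 2) using 2 with y
    ring
  have h86 : (fun y : ℝ => (y ^ 8)⁻¹) =O[atTop] fun y => (y ^ 6)⁻¹ := by
    refine IsBigO.of_bound 1 ?_
    filter_upwards [eventually_ge_atTop 1] with y hy
    rw [one_mul, norm_inv, norm_inv, norm_pow, norm_pow, Real.norm_of_nonneg (zero_le_one.trans hy)]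
    gcongr
    norm_num
  have hpoly :
      (fun y : ℝ => 9 / 2 * (y ^ 6)⁻¹ - 81 / 16 * (y ^ 8)⁻¹) =O[atTop] fun y => (y ^ 6)⁻¹ :=
    ((isBigO_refl _ _).const_mul_left _).sub (h86.const_mul_left _)
  -- `μ² = m₀² + (μ - m₀)(μ + m₀)` and `1 - 2/y² + 6/y⁴ - m₀² - 1/(2y⁴) = 9/(2y⁶) - 81/(16y⁸)`
  refine ((isBigO_Ei_term_sub.sub ((isBigO_muSSPA_sub.mul hsum).congr_right fun _ => mul_one _)).add
    hpoly).congr' ?_ EventuallyEq.rfl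
  filter_upwards [eventually_ne_atTop 0] with y hy
  simp only [m₀]
  field_simp
  ring

/-- Small-signal asymptotic of the distortion variance: as `σ/A → 0⁺`,
`λ(σ) = σ⁶/(2A⁴) + O((σ/A)⁸·A²)`. -/
theorem stmt12 (A : ℝ) (hA : 0 < A) :
    (fun σ : ℝ => lamDist A σ - σ ^ 6 / (2 * A ^ 4)) =O[nhdsWithin 0 (Set.Ioi 0)]
      (fun σ : ℝ => (σ / A) ^ 8 * A ^ 2) := by
  have hy : Tendsto (fun σ => A / σ) (𝓝[>] 0) atTop := by
    simpa [div_eq_mul_inv] using tendsto_inv_nhdsGT_zero.const_mul_atTop hA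
  refine ((isBigO_distortion.comp_tendsto hy).mul (isBigO_refl (fun σ => σ ^ 2) _)).congr' ?_ ?_
  all_goals
    filter_upwards [self_mem_nhdsWithin] with σ (hσ : 0 < σ)
    simp only [Function.comp, lamDist]
    field_simp
end
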